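/- Let λ be a special type D partition of 2n. Take the padded column list of λ (padded with zeros to even length); repeatedly delete two equal adjacent entries occupying positions 2t+1 and 2t until no such pair remains; then repeatedly delete two equal adjacent entries of odd value occupying positions 2t and 2t−1 until no such pair remains. Then every entry of the resulting list is even. (This is the assertion, implicit in Propositions 2.4 and 3.2 of the paper, that the reduced column string a''_{2q+1} ≥ a''_{2q} ≥ ⋯ ≥ a''_0 of a special orbit of SO(2n,ℂ), obtained after separating the ν column pairs and the odd μ column pairs, consists entirely of even numbers.) -/

import Mathlib

/-- `l` is a partition of `N`: a weakly decreasing list of positive integers with sum `N`. -/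
def IsPartitionOf (N : ℕ) (l : List ℕ) : Prop :=
  l.Pairwise (· ≥ ·) ∧ (∀ x ∈ l, 0 < x) ∧ l.sum = N

/-- the `j`-th column length `c_j(λ) = #{i : λ_i ≥ j}`. -/
def colLen (l : List ℕ) (j : ℕ) : ℕ := l.countP (fun x => decide (j ≤ x))

/-- the transpose partition, as the list `c_1 ≥ c_2 ≥ ⋯ ≥ c_{λ_1}` of column lengths. -/
def transposeList (l : List ℕ) : List ℕ :=
  (List.range (l.foldr max 0)).map (fun j => colLen l (j + 1))

/-- pad a list with one zero at the end if necessary so that its length is even. -/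
def padToEven (c : List ℕ) : List ℕ := if Even c.length then c else c ++ [0]

/-- Delete two equal adjacent entries occupying positions `2t+1` and `2t` for some `t ≥ 0`
(positions in a list of length `m` are numbered `m-1, …, 1, 0` from first to last). -/
def delStepE (L L' : List ℕ) : Prop :=
  ∃ (a : ℕ) (l₁ l₂ : List ℕ), Even l₂.length ∧ L = l₁ ++ a :: a :: l₂ ∧ L' = l₁ ++ l₂

/-- Delete two equal adjacent entries of odd value at positions `2t` and `2t-1`, `t ≥ 1`. -/
def delStepOOddVal (L L' : List ℕ) : Prop :=
  ∃ (a : ℕ) (l₁ l₂ : List ℕ),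
    Odd a ∧ Odd l₂.length ∧ L = l₁ ++ a :: a :: l₂ ∧ L' = l₁ ++ l₂

/-!
Along both reductions the list stays weakly decreasing, so the copies of a value `a` form a
block whose lowest position is `s = #{entries < a}`. Specialness says that every odd value
occurs an even number of times in the padded column list, and deleting equal pairs keeps this.
When no pair at positions `2t + 1, 2t` is left, a block of three or more equal entries is
impossible, so every odd value occurs exactly twice, at positions `s + 1, s` with `s` odd. This
persists under the second reduction, since it deletes whole blocks of odd values and so moves
lower blocks by two positions. At its end an odd entry would still give a deletable pair.
-/

open List Relation

theorem Relation.ReflTransGen.preserves {α : Type*} {r : α → α → Prop} {P : α → Prop}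
    (hP : ∀ {a b}, r a b → P a → P b) {a b : α} (h : ReflTransGen r a b) : P a → P b := by
  induction h with
  | refl => exact id
  | tail _ hstep ih => exact hP hstep ∘ ih

section SortedDecomposition

variable {α : Type*} [LinearOrder α] {L : List α}

theorem List.Pairwise.exists_eq_append_replicate_append (hL : L.Pairwise (· ≥ ·)) (a : α) :
    ∃ P S, L = P ++ replicate (L.count a) a ++ S ∧ (∀ x ∈ P, a < x) ∧ ∀ x ∈ S, x < a := by
  induction L with
  | nil => exact ⟨[], [], by simp, by simp, by simp⟩
  | cons b T ih =>
    obtain ⟨hb, hT⟩ := pairwise_cons.mp hL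
    obtain ⟨P, S, hT_eq, hP, hS⟩ := ih hT
    rcases lt_trichotomy a b with hab | rfl | hba
    · refine ⟨b :: P, S, ?_, ?_, hS⟩
      · rw [count_cons_of_ne hab.ne', cons_append, cons_append, ← hT_eq]
      · simpa [hab] using hP
    · have hP_nil : P = [] := eq_nil_iff_forall_not_mem.mpr fun x hx =>
        (hP x hx).not_ge (hb x (by rw [hT_eq]; simp [hx]))
      rw [hP_nil, nil_append] at hT_eq
      refine ⟨[], S, ?_, by simp, hS⟩
      rw [count_cons_self, replicate_succ, nil_append, cons_append, ← hT_eq]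
    · have hlt : ∀ x ∈ b :: T, x < a := by
        simpa [hba] using fun x hx => (hb x hx).trans_lt hba
      refine ⟨[], b :: T, ?_, by simp, hlt⟩
      rw [count_eq_zero.mpr fun ha => (hlt a ha).false]
      rfl

theorem List.Pairwise.exists_eq_append_replicate_append_length (hL : L.Pairwise (· ≥ ·))
    (a : α) : ∃ P S, L = P ++ replicate (L.count a) a ++ S ∧ S.length = L.countP (· < a) := by
  obtain ⟨P, S, hL_eq, hP, hS⟩ := hL.exists_eq_append_replicate_append a
  refine ⟨P, S, hL_eq, ?_⟩
  have hP_zero : P.countP (· < a) = 0 := by simpa using fun x hx => (hP x hx).le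
  have hS_len : S.countP (· < a) = S.length := by simpa using hS
  rw [hL_eq, countP_append, countP_append, hP_zero, hS_len]
  simp [countP_replicate]

end SortedDecomposition

theorem List.perm_append_cons_cons_append {α : Type*} (l₁ l₂ : List α) (a : α) :
    l₁ ++ a :: a :: l₂ ~ a :: a :: (l₁ ++ l₂) :=
  perm_middle.trans (perm_middle.cons a)

theorem List.sublist_append_cons_cons_append {α : Type*} (l₁ l₂ : List α) (a : α) :
    l₁ ++ l₂ <+ l₁ ++ a :: a :: l₂ :=
  (sublist_append_right [a, a] l₂).append_left l₁

theorem delStepE.sublist {L L' : List ℕ} (h : delStepE L L') : L' <+ L := by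
  obtain ⟨a, l₁, l₂, -, rfl, rfl⟩ := h
  exact sublist_append_cons_cons_append l₁ l₂ a

theorem delStepOOddVal.sublist {L L' : List ℕ} (h : delStepOOddVal L L') : L' <+ L := by
  obtain ⟨a, l₁, l₂, -, -, rfl, rfl⟩ := h
  exact sublist_append_cons_cons_append l₁ l₂ a

theorem transposeList_pairwise_ge (l : List ℕ) : (transposeList l).Pairwise (· ≥ ·) := by
  rw [transposeList, pairwise_map]
  refine pairwise_lt_range.imp fun hij => countP_mono_left fun x _ hx => ?_
  simp only [decide_eq_true_eq] at hx ⊢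
  omega

theorem padToEven_pairwise_ge {c : List ℕ} (hc : c.Pairwise (· ≥ ·)) :
    (padToEven c).Pairwise (· ≥ ·) := by
  unfold padToEven
  split
  · exact hc
  · simpa [pairwise_append] using hc

def OddMultiplicitiesEven (L : List ℕ) : Prop :=
  ∀ a, Odd a → Even (L.count a)

/-- On a weakly decreasing list the second condition says that the two copies of `a` sit at
positions `s + 1, s` with `s` odd, i.e. they form a pair deletable by `delStepOOddVal`. -/
def OddEntriesInOPairs (L : List ℕ) : Prop :=
  ∀ a, Odd a → a ∈ L → L.count a = 2 ∧ Odd (L.countP (· < a))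

theorem oddMultiplicitiesEven_padToEven_transposeList {l : List ℕ}
    (hspecial : ∀ e ∈ transposeList l, Odd e → Even ((transposeList l).count e)) :
    OddMultiplicitiesEven (padToEven (transposeList l)) := by
  intro a ha
  have hcount : (padToEven (transposeList l)).count a = (transposeList l).count a := by
    have ha0 : 0 ≠ a := by rintro rfl; exact Nat.not_odd_zero ha
    unfold padToEven
    split <;> simp [ha0]
  rw [hcount]
  by_cases hmem : a ∈ transposeList l
  · exact hspecial a hmem ha
  · simp [count_eq_zero_of_not_mem hmem]

theorem OddMultiplicitiesEven.of_delStepE {L L' : List ℕ} (h : OddMultiplicitiesEven L)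
    (hd : delStepE L L') : OddMultiplicitiesEven L' := by
  obtain ⟨a, l₁, l₂, -, rfl, rfl⟩ := hd
  intro b hb
  have := h b hb
  rw [(perm_append_cons_cons_append l₁ l₂ a).count_eq, count_cons, count_cons] at this
  split_ifs at this <;> simp only [Nat.even_iff] at this ⊢ <;> omega

theorem exists_delStepE_append_cons_cons_cons (P S : List ℕ) (a : ℕ) :
    ∃ L', delStepE (P ++ a :: a :: a :: S) L' := by
  rcases Nat.even_or_odd S.length with hS | hS
  · exact ⟨P ++ a :: S, a, P ++ [a], S, hS, by simp, by simp⟩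
  · exact ⟨P ++ a :: S, a, P, a :: S, by simpa [Nat.even_add_one] using hS, rfl, rfl⟩

theorem oddEntriesInOPairs_of_delStepE_normal {L : List ℕ} (hs : L.Pairwise (· ≥ ·))
    (h : OddMultiplicitiesEven L) (hnf : ∀ L', ¬ delStepE L L') : OddEntriesInOPairs L := by
  intro a ha hmem
  obtain ⟨P, S, hL, hS⟩ := hs.exists_eq_append_replicate_append_length a
  have hcount_lt : L.count a < 3 := by
    by_contra! h3
    obtain ⟨k, hk⟩ := Nat.exists_eq_add_of_le h3
    obtain ⟨L', hL'⟩ := exists_delStepE_append_cons_cons_cons P (replicate k a ++ S) a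
    refine hnf L' ?_
    rw [hL, hk, replicate_add]
    simpa using hL'
  have hcount : L.count a = 2 := by
    have hpos := count_pos_iff.mpr hmem
    obtain ⟨k, hk⟩ := h a ha
    omega
  refine ⟨hcount, ?_⟩
  rw [hcount] at hL
  rcases Nat.even_or_odd (L.countP (· < a)) with he | ho
  · exact (hnf (P ++ S) ⟨a, P, S, hS ▸ he, by simpa using hL, rfl⟩).elim
  · exact ho

theorem OddEntriesInOPairs.of_delStepOOddVal {L L' : List ℕ} (h : OddEntriesInOPairs L)
    (hd : delStepOOddVal L L') : OddEntriesInOPairs L' := by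
  obtain ⟨a, l₁, l₂, ha, -, rfl, rfl⟩ := hd
  have hperm := perm_append_cons_cons_append l₁ l₂ a
  have ha_gone : a ∉ l₁ ++ l₂ := by
    have := (h a ha (by simp)).1
    rw [hperm.count_eq, count_cons_self, count_cons_self] at this
    exact count_eq_zero.mp (by omega)
  intro b hb hmem
  have hba : b ≠ a := by rintro rfl; exact ha_gone hmem
  obtain ⟨hcount, hodd⟩ := h b hb ((sublist_append_cons_cons_append l₁ l₂ a).mem hmem)
  rw [hperm.count_eq, count_cons_of_ne hba.symm, count_cons_of_ne hba.symm] at hcount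
  rw [hperm.countP_eq, countP_cons, countP_cons] at hodd
  refine ⟨hcount, ?_⟩
  split_ifs at hodd <;> simp only [Nat.odd_iff] at hodd ⊢ <;> omega

theorem even_of_delStepOOddVal_normal {L : List ℕ} (hs : L.Pairwise (· ≥ ·))
    (h : OddEntriesInOPairs L) (hnf : ∀ L', ¬ delStepOOddVal L L') : ∀ x ∈ L, Even x := by
  intro x hx
  by_contra hx_odd
  rw [Nat.not_even_iff_odd] at hx_odd
  obtain ⟨hcount, hodd⟩ := h x hx_odd hx
  obtain ⟨P, S, hL, hS⟩ := hs.exists_eq_append_replicate_append_length x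
  rw [hcount] at hL
  exact hnf (P ++ S) ⟨x, P, S, hx_odd, hS ▸ hodd, by simpa using hL, rfl⟩

theorem typeD_reducedColumnString_even_general (l : List ℕ)
    (hspecial : ∀ e ∈ transposeList l, Odd e → Even ((transposeList l).count e)) :
    ∀ M₁ M₂ : List ℕ,
      Relation.ReflTransGen delStepE (padToEven (transposeList l)) M₁ →
      (∀ M', ¬ delStepE M₁ M') →
      Relation.ReflTransGen delStepOOddVal M₁ M₂ →
      (∀ M', ¬ delStepOOddVal M₂ M') →
      ∀ x ∈ M₂, Even x := by
  intro M₁ M₂ hE hE_nf hO hO_nf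
  have hs₀ := padToEven_pairwise_ge (transposeList_pairwise_ge l)
  have hs₁ : M₁.Pairwise (· ≥ ·) := hE.preserves (fun hd hs => hs.sublist hd.sublist) hs₀
  have hs₂ : M₂.Pairwise (· ≥ ·) := hO.preserves (fun hd hs => hs.sublist hd.sublist) hs₁
  have h₁ : OddMultiplicitiesEven M₁ :=
    hE.preserves (fun hd h => h.of_delStepE hd)
      (oddMultiplicitiesEven_padToEven_transposeList hspecial)
  have h₂ : OddEntriesInOPairs M₂ :=
    hO.preserves (fun hd h => h.of_delStepOOddVal hd)
      (oddEntriesInOPairs_of_delStepE_normal hs₁ h₁ hE_nf)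
  exact even_of_delStepOOddVal_normal hs₂ h₂ hO_nf

/-- Let `l` be a special type D partition of `2n`.  Take the padded column list of `l`
(padded with zeros to even length); repeatedly delete two equal adjacent entries at
positions `2t+1` and `2t` until no such pair remains; then repeatedly delete two equal
adjacent entries of odd value at positions `2t` and `2t-1` until no such pair remains.
Then every entry of the resulting list is even. -/
theorem typeD_reducedColumnString_even (n : ℕ) (l : List ℕ)
    (hpart : IsPartitionOf (2 * n) l)
    (hD : ∀ e ∈ l, Even e → Even (l.count e))
    (hspecial : ∀ e ∈ transposeList l, Odd e → Even ((transposeList l).count e)) :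
    ∀ M₁ M₂ : List ℕ,
      Relation.ReflTransGen delStepE (padToEven (transposeList l)) M₁ →
      (∀ M', ¬ delStepE M₁ M') →
      Relation.ReflTransGen delStepOOddVal M₁ M₂ →
      (∀ M', ¬ delStepOOddVal M₂ M') →
      ∀ x ∈ M₂, Even x :=
  typeD_reducedColumnString_even_general l hspecial
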